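/- arXiv:2311.10480 — 2 statements merged into one kernel-verified Lean document; each statement's English description precedes it below -/
import Mathlib

section
/- If a signed graph G contains no bad cycle (no cycle with exactly one negative edge), then G is clusterable. -/
/- A signed graph is a simple graph `G` together with a sign function on (potential) edges;
`sign e = true` means the edge is positive, `sign e = false` means it is negative. -/

/-- The positive subgraph: the spanning subgraph on the same vertex set whose edges are the
positive edges of `G`. -/
def posSubgraph {V : Type} (G : SimpleGraph V) (sign : Sym2 V → Bool) : SimpleGraph V where
  Adj u v := G.Adj u v ∧ sign s(u, v) = true
  symm := ⟨fun u v ⟨h, hs⟩ => ⟨h.symm, by rwa [Sym2.eq_swap]⟩⟩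
  loopless := ⟨fun v ⟨h, _⟩ => G.loopless.irrefl v h⟩

/-- A signed graph is clusterable if there is a map `c` from the vertices to some set of
clusters such that every edge inside a cluster is positive and every edge between two
different clusters is negative. -/
def Clusterable {V : Type} (G : SimpleGraph V) (sign : Sym2 V → Bool) : Prop :=
  ∃ (K : Type) (c : V → K), ∀ u v : V, G.Adj u v → (c u = c v ↔ sign s(u, v) = true)

/-- A bad cycle: a cycle of `G` containing exactly one negative edge. -/
def HasBadCycle {V : Type} (G : SimpleGraph V) (sign : Sym2 V → Bool) : Prop :=
  ∃ (v : V) (w : G.Walk v v), w.IsCycle ∧ (w.edges.filter fun e => sign e = false).length = 1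

/-- If a signed graph contains no bad cycle, then it is clusterable. -/
theorem no_bad_cycle_imp_clusterable {V : Type} [Fintype V]
    (G : SimpleGraph V) (sign : Sym2 V → Bool)
    (h : ¬ HasBadCycle G sign) : Clusterable G sign := by
  refine ⟨(posSubgraph G sign).ConnectedComponent,
    (posSubgraph G sign).connectedComponentMk, fun u v hadj => ?_⟩
  constructor
  · intro hc
    classical
    by_contra hneg
    have hsign : sign s(u, v) = false := by
      cases hb : sign s(u, v) with
      | false => rfl
      | true => exact absurd hb hneg
    obtain ⟨w⟩ := SimpleGraph.ConnectedComponent.exact hc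
    have hle : posSubgraph G sign ≤ G := fun a b hab => hab.1
    set p : (posSubgraph G sign).Walk u v := (w.toPath).val
    have hppath : p.IsPath := w.toPath.2
    -- all edges of p are positive
    have hpos : ∀ e ∈ p.edges, sign e = true := by
      intro e he
      have := p.edges_subset_edgeSet he
      induction e with
      | h a b => exact this.2
    set q : G.Walk u v := p.mapLe hle
    have hqe : q.edges = p.edges := by
      simp only [q, SimpleGraph.Walk.mapLe, SimpleGraph.Walk.edges_map,
        show ⇑(SimpleGraph.Hom.ofLE hle) = id from rfl,
        Sym2.map_id, List.map_id]
    have hqpath : q.IsPath := hppath.mapLe hle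
    have hnotmem : s(v, u) ∉ q.edges := by
      rw [hqe]
      intro hmem
      have := hpos _ hmem
      rw [Sym2.eq_swap] at this
      rw [this] at hsign
      exact Bool.noConfusion hsign
    refine h ⟨v, SimpleGraph.Walk.cons hadj.symm q, ?_, ?_⟩
    · exact (SimpleGraph.Walk.cons_isCycle_iff q hadj.symm).mpr ⟨hqpath, hnotmem⟩
    · rw [SimpleGraph.Walk.edges_cons, List.filter_cons]
      have h1 : (decide (sign s(v, u) = false)) = true := by
        rw [Sym2.eq_swap, hsign]; simp
      rw [if_pos h1]
      have h2 : q.edges.filter (fun e => decide (sign e = false)) = [] := by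
        rw [List.filter_eq_nil_iff]
        intro e he
        rw [hqe] at he
        simp [hpos e he]
      rw [h2]
      rfl
  · intro hs
    exact SimpleGraph.ConnectedComponent.sound
      ⟨SimpleGraph.Walk.cons ⟨hadj, hs⟩ SimpleGraph.Walk.nil⟩
end

section
/- A signed graph G is clusterable if and only if no negative edge of G joins two vertices that lie in the same connected component of the positive subgraph of G. -/
/-- A signed graph is clusterable iff no negative edge joins two vertices lying in the same
connected component of the positive subgraph. -/
theorem clusterable_iff_no_neg_edge_in_pos_component {V : Type} [Fintype V]
    (G : SimpleGraph V) (sign : Sym2 V → Bool) :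
    Clusterable G sign ↔
      ∀ u v : V, G.Adj u v → sign s(u, v) = false →
        ¬ (posSubgraph G sign).Reachable u v := by
  constructor
  · rintro ⟨K, c, hc⟩ u v hadj hneg hreach
    have key : ∀ {a b : V} (p : (posSubgraph G sign).Walk a b), c a = c b := by
      intro a b p
      induction p with
      | nil => rfl
      | cons h p ih => exact ((hc _ _ (h : G.Adj _ _ ∧ _).1).mpr (h : G.Adj _ _ ∧ _).2).trans ih
    have : c u = c v := hreach.elim key
    rw [hc u v hadj] at this
    simp [hneg] at this
  · intro h
    refine ⟨(posSubgraph G sign).ConnectedComponent,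
      (posSubgraph G sign).connectedComponentMk, fun u v hadj => ?_⟩
    rw [SimpleGraph.ConnectedComponent.eq]
    constructor
    · intro hr
      by_contra hne
      exact h u v hadj (by simpa using hne) hr
    · intro hs
      exact SimpleGraph.Adj.reachable (⟨hadj, hs⟩ : G.Adj u v ∧ _)
end
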